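/- Let N = 2n+1 be odd and D the equispaced trigonometric differentiation matrix. Then the trace of D² equals -2 Σ_{m=1}^{n} m² = -n(n+1)(2n+1)/3. -/

import Mathlib

/-!
`D` is the spectral differentiation matrix on the grid `2πj/N`: the discrete Fourier transform
on the frequencies `-n, …, n` diagonalises it as `D = F · diag(i m) · F⁻¹`. The entry formula is
the derivative of a geometric series evaluated at the `N`-th root of unity `ζ^(j-k) = w²`,
`w = exp(iπ(j-k)/N)`; since `N` is odd, `w^N = (-1)^(j+k)` produces the sign of `D`. Hence
`tr D² = ∑_{m=-n}^{n} (i m)² = -2 ∑_{m=1}^{n} m²`.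
-/

open Real

/-- The equispaced trigonometric differentiation matrix (real). -/
noncomputable def Dmat (N : ℕ) : Matrix (Fin N) (Fin N) ℝ := fun j k =>
  if j = k then 0
  else (-1 : ℝ) ^ (j.1 + k.1) / (2 * Real.sin (π * ((j.1 : ℝ) - (k.1 : ℝ)) / N))

open Finset

theorem Matrix.trace_mul_diagonal_mul_sq {ι κ R : Type*} [Fintype ι] [DecidableEq ι] [Fintype κ]
    [DecidableEq κ] [CommSemiring R] {U : Matrix ι κ R} {V : Matrix κ ι R} (hVU : V * U = 1)
    (d : κ → R) :
    trace ((U * diagonal d * V) ^ 2) = ∑ m, d m ^ 2 := by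
  have hsq : (U * diagonal d * V) ^ 2 = U * (diagonal d * (V * U) * diagonal d) * V := by
    simp only [sq, Matrix.mul_assoc]
  rw [hsq, hVU, Matrix.mul_one, diagonal_mul_diagonal, trace_mul_cycle, hVU, Matrix.one_mul,
    trace_diagonal]
  simp only [sq]

theorem sub_one_mul_sum_range_mul_pow {R : Type*} [CommRing R] (z : R) (N : ℕ) :
    (z - 1) * ∑ j ∈ range N, (j : R) * z ^ j = N * z ^ N - ∑ j ∈ range N, z ^ (j + 1) := by
  induction N with
  | zero => simp
  | succ N ih =>
    rw [sum_range_succ, mul_add, ih, sum_range_succ _ N]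
    push_cast
    ring

theorem sub_one_mul_sum_range_sub_mul_pow {K : Type*} [Field K] {z : K} {N : ℕ}
    (hzN : z ^ N = 1) (hz : z ≠ 1) (c : K) :
    (z - 1) * ∑ j ∈ range N, ((j : K) - c) * z ^ j = N := by
  have hgeom : ∑ j ∈ range N, z ^ j = 0 := by
    rw [geom_sum_eq hz, hzN, sub_self, zero_div]
  have hshift : ∑ j ∈ range N, z ^ (j + 1) = 0 := by
    simp only [pow_succ, ← sum_mul, hgeom, zero_mul]
  have hc : ∑ j ∈ range N, ((j : K) - c) * z ^ j = ∑ j ∈ range N, (j : K) * z ^ j := by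
    simp only [sub_mul, sum_sub_distrib, ← mul_sum, hgeom, mul_zero, sub_zero]
  rw [hc, sub_one_mul_sum_range_mul_pow, hzN, hshift, mul_one, sub_zero]

theorem IsPrimitiveRoot.sum_range_zpow_pow {K : Type*} [Field K] {ζ : K} {N : ℕ}
    (hζ : IsPrimitiveRoot ζ N) (r : ℤ) :
    ∑ k ∈ range N, (ζ ^ r) ^ k = if (N : ℤ) ∣ r then (N : K) else 0 := by
  split_ifs with h
  · simp [(hζ.zpow_eq_one_iff_dvd r).2 h]
  · have hr : ζ ^ r ≠ 1 := mt (hζ.zpow_eq_one_iff_dvd r).1 h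
    rw [geom_sum_eq hr, ← zpow_natCast, ← zpow_mul, mul_comm, zpow_mul, hζ.zpow_eq_one,
      one_zpow, sub_self, zero_div]

theorem Fin.eq_of_intCast_dvd_sub {N : ℕ} {a b : Fin N} (h : (N : ℤ) ∣ (a : ℤ) - b) : a = b := by
  have hlt : |(a : ℤ) - b| < N := by
    rw [abs_sub_lt_iff]; constructor <;> omega
  exact Fin.ext (by have := Int.eq_zero_of_abs_lt_dvd h hlt; omega)

section Fourier

variable {K κ : Type*} [Field K] [DecidableEq κ]

def fourierMatrix (N : ℕ) (ζ : K) (f : κ → ℤ) : Matrix (Fin N) κ K := fun j m => ζ ^ (f m * j)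

def invFourierMatrix (N : ℕ) (ζ : K) (f : κ → ℤ) : Matrix κ (Fin N) K :=
  fun m k => ζ ^ (-(f m * k)) / N

theorem invFourierMatrix_mul_fourierMatrix {N : ℕ} [NeZero N] {ζ : K} (hζ : IsPrimitiveRoot ζ N)
    {f : κ → ℤ} (hf : ∀ m m', (N : ℤ) ∣ f m - f m' → m = m') :
    invFourierMatrix N ζ f * fourierMatrix N ζ f = 1 := by
  have hζ0 : ζ ≠ 0 := hζ.ne_zero (NeZero.ne N)
  have hN : (N : K) ≠ 0 := hζ.neZero'.out
  ext m m'
  have hterm : ∀ k : Fin N, invFourierMatrix N ζ f m k * fourierMatrix N ζ f k m'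
      = (ζ ^ (f m' - f m)) ^ (k : ℕ) / N := by
    intro k
    rw [invFourierMatrix, fourierMatrix, div_mul_eq_mul_div, ← zpow_add₀ hζ0, ← zpow_natCast,
      ← zpow_mul]
    congr 2
    ring
  rw [Matrix.mul_apply, sum_congr rfl fun k _ => hterm k, ← sum_div,
    Fin.sum_univ_eq_sum_range (fun k => (ζ ^ (f m' - f m)) ^ k), hζ.sum_range_zpow_pow,
    Matrix.one_apply]
  by_cases h : m = m'
  · simp [h, hN]
  · rw [if_neg fun hd => h (hf m' m hd).symm, if_neg h, zero_div]

theorem fourierMatrix_mul_diagonal_mul_invFourierMatrix_apply [Fintype κ] {N : ℕ} {ζ : K}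
    (hζ : ζ ≠ 0) (f : κ → ℤ) (d : κ → K) (j k : Fin N) :
    (fourierMatrix N ζ f * Matrix.diagonal d * invFourierMatrix N ζ f) j k
      = (∑ m, d m * (ζ ^ ((j : ℤ) - k)) ^ f m) / N := by
  rw [Matrix.mul_apply, sum_div]
  refine sum_congr rfl fun m _ => ?_
  rw [Matrix.mul_diagonal, fourierMatrix, invFourierMatrix, ← zpow_mul,
    show ∀ a b : K, a * d m * (b / N) = d m * (a * b) / N from fun a b => by ring,
    ← zpow_add₀ hζ]
  congr 3
  ring

end Fourier

theorem pow_mul_sub_one_mul_sum_fin_sub_mul_zpow {K : Type*} [Field K] {z : K} (n : ℕ)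
    (hzN : z ^ (2 * n + 1) = 1) (hz : z ≠ 1) :
    z ^ n * (z - 1) * ∑ m : Fin (2 * n + 1), ((m : K) - n) * z ^ ((m : ℤ) - n)
      = (2 * n + 1 : ℕ) := by
  have hz0 : z ≠ 0 := by rintro rfl; simp at hzN
  have hsum : ∑ m : Fin (2 * n + 1), ((m : K) - n) * z ^ ((m : ℤ) - n)
      = (∑ m ∈ range (2 * n + 1), ((m : K) - n) * z ^ m) / z ^ n := by
    rw [Fin.sum_univ_eq_sum_range (fun m => ((m : K) - n) * z ^ ((m : ℤ) - n)), sum_div]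
    refine sum_congr rfl fun m _ => ?_
    rw [zpow_sub₀ hz0, zpow_natCast, zpow_natCast, mul_div_assoc]
  rw [hsum, ← sub_one_mul_sum_range_sub_mul_pow hzN hz (n : K)]
  field_simp

theorem sum_fin_sub_eq_zero {R : Type*} [CommRing R] (n : ℕ) :
    ∑ m : Fin (2 * n + 1), ((m : R) - n) = 0 := by
  have hgauss := congrArg (Nat.cast : ℕ → ℤ) (sum_range_id_mul_two (2 * n + 1))
  rw [Nat.add_sub_cancel] at hgauss
  push_cast at hgauss
  have hℤ : ∑ m ∈ range (2 * n + 1), ((m : ℤ) - n) = 0 := by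
    rw [sum_sub_distrib, sum_const, card_range, nsmul_eq_mul]
    push_cast
    linarith
  rw [Fin.sum_univ_eq_sum_range (fun m => (m : R) - n)]
  exact_mod_cast congrArg (Int.cast : ℤ → R) hℤ

noncomputable def unitRoot (N : ℕ) : ℂ := Complex.exp (2 * π * Complex.I / N)

theorem unitRoot_zpow_pow_mul_sub_one (n j k : ℕ) :
    (unitRoot (2 * n + 1) ^ ((j : ℤ) - k)) ^ n * (unitRoot (2 * n + 1) ^ ((j : ℤ) - k) - 1)
      = (-1) ^ (j + k) * (2 * Complex.I * Real.sin (π * ((j : ℝ) - k) / (2 * n + 1 : ℕ))) := by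
  set θ : ℝ := π * ((j : ℝ) - k) / (2 * n + 1 : ℕ)
  set w := Complex.exp (θ * Complex.I)
  have hw0 : w ≠ 0 := Complex.exp_ne_zero _
  have hN : (2 * n + 1 : ℂ) ≠ 0 := by exact_mod_cast Nat.succ_ne_zero (2 * n)
  have hz : unitRoot (2 * n + 1) ^ ((j : ℤ) - k) = w ^ 2 := by
    rw [unitRoot, ← Complex.exp_int_mul, ← Complex.exp_nat_mul]
    congr 1
    simp only [θ]
    push_cast
    field_simp
  have hwN : w ^ (2 * n + 1) = (-1) ^ (j + k) := by
    rw [← Complex.exp_nat_mul, show ((2 * n + 1 : ℕ) : ℂ) * (θ * Complex.I)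
        = j * (π * Complex.I) - k * (π * Complex.I) by simp only [θ]; push_cast; field_simp,
      Complex.exp_sub, Complex.exp_nat_mul, Complex.exp_nat_mul, Complex.exp_pi_mul_I,
      div_eq_mul_inv, ← inv_pow, inv_neg_one, pow_add]
  have hsin : 2 * Complex.I * Real.sin θ = w - w⁻¹ := by
    rw [Complex.ofReal_sin, Complex.sin, ← Complex.exp_neg, neg_mul]
    linear_combination (Complex.exp (-(θ * Complex.I)) - Complex.exp (θ * Complex.I))
      * Complex.I_sq
  rw [hz, ← hwN, hsin]
  field_simp
  ring

def centeredFreq (n : ℕ) (m : Fin (2 * n + 1)) : ℤ := m - n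

theorem Dmat_map_ofReal (n : ℕ) :
    (Dmat (2 * n + 1)).map Complex.ofReal
      = fourierMatrix (2 * n + 1) (unitRoot (2 * n + 1)) (centeredFreq n)
        * Matrix.diagonal (fun m => Complex.I * centeredFreq n m)
        * invFourierMatrix (2 * n + 1) (unitRoot (2 * n + 1)) (centeredFreq n) := by
  have hζ : IsPrimitiveRoot (unitRoot (2 * n + 1)) (2 * n + 1) :=
    Complex.isPrimitiveRoot_exp _ (Nat.succ_ne_zero _)
  have hN : ((2 * n + 1 : ℕ) : ℂ) ≠ 0 := Nat.cast_ne_zero.mpr (Nat.succ_ne_zero _)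
  ext j k
  rw [Matrix.map_apply, fourierMatrix_mul_diagonal_mul_invFourierMatrix_apply
    (hζ.ne_zero (Nat.succ_ne_zero _))]
  simp only [centeredFreq, Int.cast_sub, Int.cast_natCast, mul_assoc, ← mul_sum]
  by_cases hjk : j = k
  · subst hjk
    simp only [Dmat, ↓reduceIte, sub_self, zpow_zero, one_zpow, mul_one, sum_fin_sub_eq_zero,
      mul_zero, zero_div, Complex.ofReal_zero]
  set z := unitRoot (2 * n + 1) ^ ((j : ℤ) - k)
  have hzN : z ^ (2 * n + 1) = 1 := by
    rw [← zpow_natCast, ← zpow_mul]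
    exact (hζ.zpow_eq_one_iff_dvd _).2 (dvd_mul_left _ _)
  have hz1 : z ≠ 1 := fun h => hjk (Fin.eq_of_intCast_dvd_sub ((hζ.zpow_eq_one_iff_dvd _).1 h))
  have hsum := pow_mul_sub_one_mul_sum_fin_sub_mul_zpow n hzN hz1
  rw [unitRoot_zpow_pow_mul_sub_one] at hsum
  have hne := left_ne_zero_of_mul (hsum ▸ hN)
  simp only [Dmat, if_neg hjk]
  push_cast at hN hsum hne ⊢
  have hsign : ((-1 : ℂ) ^ ((j : ℕ) + k)) ^ 2 = 1 := by
    rw [← pow_mul, pow_mul', neg_one_sq, one_pow]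
  generalize Complex.sin _ = s at hsum hne ⊢
  generalize (∑ m : Fin (2 * n + 1), _ : ℂ) = S at hsum ⊢
  generalize (-1 : ℂ) ^ ((j : ℕ) + k) = a at hsum hne hsign ⊢
  have hS : S ≠ 0 := right_ne_zero_of_mul (hsum ▸ hN)
  have hs : s ≠ 0 := by rintro rfl; simp at hne
  rw [← hsum, div_eq_div_iff (mul_ne_zero two_ne_zero hs) (mul_ne_zero hne hS)]
  linear_combination 2 * Complex.I * s * S * hsign

theorem trace_Dmat_sq_eq_neg_sum (n : ℕ) :
    Matrix.trace (Dmat (2 * n + 1) ^ 2) = -∑ m : Fin (2 * n + 1), ((m : ℝ) - n) ^ 2 := by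
  have hζ : IsPrimitiveRoot (unitRoot (2 * n + 1)) (2 * n + 1) :=
    Complex.isPrimitiveRoot_exp _ (Nat.succ_ne_zero _)
  have hVU := invFourierMatrix_mul_fourierMatrix hζ (f := centeredFreq n)
    fun m m' h => Fin.eq_of_intCast_dvd_sub (by simpa [centeredFreq] using h)
  apply Complex.ofReal_injective
  change Complex.ofRealHom _ = Complex.ofRealHom _
  rw [AddMonoidHom.map_trace, ← RingHom.mapMatrix_apply, map_pow, RingHom.mapMatrix_apply,
    show (Dmat (2 * n + 1)).map Complex.ofRealHom = _ from Dmat_map_ofReal n,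
    Matrix.trace_mul_diagonal_mul_sq hVU, Complex.ofRealHom_eq_coe]
  push_cast [centeredFreq]
  simp only [mul_pow, Complex.I_sq, neg_one_mul, sum_neg_distrib]

theorem sum_range_sub_sq (n : ℕ) :
    ∑ m ∈ range (2 * n + 1), ((m : ℝ) - n) ^ 2 = 2 * ∑ m ∈ Icc 1 n, (m : ℝ) ^ 2 := by
  induction n with
  | zero => simp
  | succ n ih =>
    rw [show 2 * (n + 1) + 1 = 2 * n + 1 + 1 + 1 by ring, sum_range_succ, sum_range_succ',
      sum_Icc_succ_top (Nat.le_add_left 1 n)]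
    push_cast
    simp only [add_sub_add_right_eq_sub, ih]
    ring

theorem sum_Icc_sq_mul_six (n : ℕ) :
    (∑ m ∈ Icc 1 n, (m : ℝ) ^ 2) * 6 = n * (n + 1) * (2 * n + 1) := by
  induction n with
  | zero => simp
  | succ n ih =>
    rw [sum_Icc_succ_top (Nat.le_add_left 1 n), add_mul, ih]
    push_cast
    ring

theorem trace_Dmat_sq (n : ℕ) :
    Matrix.trace ((Dmat (2 * n + 1)) ^ 2) = -2 * ∑ m ∈ Finset.Icc 1 n, (m : ℝ) ^ 2 ∧
    Matrix.trace ((Dmat (2 * n + 1)) ^ 2) = -(n * (n + 1) * (2 * n + 1) : ℝ) / 3 := by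
  have htrace : Matrix.trace (Dmat (2 * n + 1) ^ 2) = -2 * ∑ m ∈ Icc 1 n, (m : ℝ) ^ 2 := by
    rw [trace_Dmat_sq_eq_neg_sum, Fin.sum_univ_eq_sum_range (fun m => ((m : ℝ) - n) ^ 2),
      sum_range_sub_sq]
    ring
  refine ⟨htrace, ?_⟩
  rw [htrace]
  linear_combination -(sum_Icc_sq_mul_six n) / 3
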